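/- Let U be a Banach space, α ∈ (1/3, 1/2], X : [0,T] → U α-Hölder, and let (Z, Z') be a real-valued path controlled by X and (Y, Y') a V-valued path controlled by X (V a Banach space). Then the pointwise product (ZY, Z'Y + ZY') — where (Z'Y + ZY')_t(u) := (Z'_t u)·Y_t + Z_t·(Y'_t u) — is a V-valued path controlled by X, and its controlled-path norm is bounded by C·‖(Z,Z')‖·‖(Y,Y')‖ for a constant C depending only on T, α and ‖X‖_{α-Höl}. -/

import Mathlib

/-!
Writing `R^Z_{st} = Z_t - Z_s - Z'_s (X_t - X_s)` for the remainder, the product satisfies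
`R^{ZY}_{st} = (Z_t - Z_s)(Y_t - Y_s) + R^Z_{st} Y_s + Z_s R^Y_{st}`, and the increment of its
Gubinelli derivative splits into four terms, each an increment of one factor times a value of the
other. So if the values, increments and remainders of the two factors are bounded by `A` and `B`,
those of the product are bounded by `4 A B`. For a controlled path such a bound is a multiple of
its norm depending only on `T^α` and the Hölder constant of `X`: on `[0,T]` a value is the value
at `0` plus an increment, and the increment `Z_t - Z_s` is the remainder plus `Z'_s (X_t - X_s)`.
-/

/-- `β`-Hölder seminorm of a map on `[0,T]`. -/
noncomputable def hSemi {E : Type*} [NormedAddCommGroup E] (T β : ℝ)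
    (f : Set.Icc (0:ℝ) T → E) : ℝ :=
  ⨆ p : Set.Icc (0:ℝ) T × Set.Icc (0:ℝ) T,
    if (p.1 : ℝ) < (p.2 : ℝ) then ‖f p.2 - f p.1‖ / ((p.2 : ℝ) - (p.1 : ℝ)) ^ β else 0

/-- `2α`-Hölder seminorm of the remainder `R_{ts} = Z_t - Z_s - Z'_s(X_t - X_s)`. -/
noncomputable def rSemi {U V : Type*} [NormedAddCommGroup U] [NormedSpace ℝ U]
    [NormedAddCommGroup V] [NormedSpace ℝ V] (T α : ℝ)
    (X : Set.Icc (0:ℝ) T → U) (Z : Set.Icc (0:ℝ) T → V)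
    (Z' : Set.Icc (0:ℝ) T → U →L[ℝ] V) : ℝ :=
  ⨆ p : Set.Icc (0:ℝ) T × Set.Icc (0:ℝ) T,
    if (p.1 : ℝ) < (p.2 : ℝ) then
      ‖Z p.2 - Z p.1 - Z' p.1 (X p.2 - X p.1)‖ / ((p.2 : ℝ) - (p.1 : ℝ)) ^ (2*α)
    else 0

/-- The set of controlled-path data `(Z, Z')`: `Z'` is `α`-Hölder and the
remainder is `2α`-Hölder. -/
def ctrlSet {U V : Type*} [NormedAddCommGroup U] [NormedSpace ℝ U]
    [NormedAddCommGroup V] [NormedSpace ℝ V] (T α : ℝ)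
    (X : Set.Icc (0:ℝ) T → U) :
    Set ((Set.Icc (0:ℝ) T → V) × (Set.Icc (0:ℝ) T → U →L[ℝ] V)) :=
  {p | (∃ C : ℝ, ∀ s t : Set.Icc (0:ℝ) T, ‖p.2 t - p.2 s‖ ≤ C * |(t : ℝ) - (s : ℝ)| ^ α) ∧
       (∃ K : ℝ, ∀ s t : Set.Icc (0:ℝ) T,
          ‖p.1 t - p.1 s - p.2 s (X t - X s)‖ ≤ K * |(t : ℝ) - (s : ℝ)| ^ (2*α))}

/-- The controlled-path norm `‖Z'‖_{α} + ‖R‖_{2α} + |Z_0| + |Z'_0|`. -/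
noncomputable def ctrlNorm {U V : Type*} [NormedAddCommGroup U] [NormedSpace ℝ U]
    [NormedAddCommGroup V] [NormedSpace ℝ V] {T : ℝ} (hT : 0 ≤ T) (α : ℝ)
    (X : Set.Icc (0:ℝ) T → U)
    (p : (Set.Icc (0:ℝ) T → V) × (Set.Icc (0:ℝ) T → U →L[ℝ] V)) : ℝ :=
  hSemi T α p.2 + rSemi T α X p.1 p.2
    + ‖p.1 ⟨0, Set.left_mem_Icc.2 hT⟩‖ + ‖p.2 ⟨0, Set.left_mem_Icc.2 hT⟩‖

open Set

-- `hSemi` and `rSemi` are both of this form, definitionally.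
noncomputable def ratioSup (T β : ℝ) (g : Icc (0:ℝ) T → Icc (0:ℝ) T → ℝ) : ℝ :=
  ⨆ p : Icc (0:ℝ) T × Icc (0:ℝ) T,
    if (p.1 : ℝ) < p.2 then g p.1 p.2 / ((p.2 : ℝ) - p.1) ^ β else 0

section RatioSup

variable {T β : ℝ} {g : Icc (0:ℝ) T → Icc (0:ℝ) T → ℝ}

lemma ratioSup_nonneg (hg : ∀ s t, 0 ≤ g s t) : 0 ≤ ratioSup T β g :=
  Real.iSup_nonneg fun p => by
    split_ifs with hp
    · exact div_nonneg (hg _ _) (Real.rpow_nonneg (sub_pos.2 hp).le _)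
    · exact le_rfl

lemma ratioSup_term_le {M : ℝ} (hM : 0 ≤ M)
    (h : ∀ s t : Icc (0:ℝ) T, g s t ≤ M * |(t:ℝ) - s| ^ β) (p : Icc (0:ℝ) T × Icc (0:ℝ) T) :
    (if (p.1 : ℝ) < p.2 then g p.1 p.2 / ((p.2 : ℝ) - p.1) ^ β else 0) ≤ M := by
  split_ifs with hp
  · rw [div_le_iff₀ (Real.rpow_pos_of_pos (sub_pos.2 hp) β), ← abs_of_pos (sub_pos.2 hp)]
    exact h _ _
  · exact hM

lemma ratioSup_le {M : ℝ} (hM : 0 ≤ M) (h : ∀ s t : Icc (0:ℝ) T, g s t ≤ M * |(t:ℝ) - s| ^ β) :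
    ratioSup T β g ≤ M :=
  Real.iSup_le (ratioSup_term_le hM h) hM

lemma le_ratioSup_mul {M : ℝ} (h : ∀ s t : Icc (0:ℝ) T, g s t ≤ M * |(t:ℝ) - s| ^ β)
    {s t : Icc (0:ℝ) T} (hst : (s:ℝ) < t) :
    g s t ≤ ratioSup T β g * ((t:ℝ) - s) ^ β := by
  have hM : ∀ s t : Icc (0:ℝ) T, g s t ≤ max M 0 * |(t:ℝ) - s| ^ β := fun s t =>
    (h s t).trans (mul_le_mul_of_nonneg_right (le_max_left M 0) (by positivity))
  have hbdd :=
    le_ciSup ⟨max M 0, forall_mem_range.2 (ratioSup_term_le (le_max_right M 0) hM)⟩ (s, t)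
  rw [if_pos hst, div_le_iff₀ (Real.rpow_pos_of_pos (sub_pos.2 hst) β)] at hbdd
  exact hbdd

end RatioSup

lemma rpow_two_mul_eq_mul_self {x : ℝ} (hx : 0 ≤ x) (y : ℝ) : x ^ (2 * y) = x ^ y * x ^ y := by
  rw [← Real.mul_rpow hx hx, ← sq, ← Real.rpow_natCast_mul hx, Nat.cast_ofNat]

lemma abs_sub_rpow_le {T α : ℝ} (hα : 0 ≤ α) (s t : Icc (0:ℝ) T) :
    |(t:ℝ) - s| ^ α ≤ T ^ α :=
  Real.rpow_le_rpow (abs_nonneg _) (abs_sub_le_of_nonneg_of_le t.2.1 t.2.2 s.2.1 s.2.2) hα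

lemma holder_const_nonneg {E : Type*} [NormedAddCommGroup E] {T α C : ℝ} (hT : 0 < T)
    {f : Icc (0:ℝ) T → E} (hf : ∀ s t : Icc (0:ℝ) T, ‖f t - f s‖ ≤ C * |(t:ℝ) - s| ^ α) :
    0 ≤ C := by
  have h := (norm_nonneg _).trans (hf ⟨0, left_mem_Icc.2 hT.le⟩ ⟨T, right_mem_Icc.2 hT.le⟩)
  simp only [sub_zero, abs_of_pos hT] at h
  exact nonneg_of_mul_nonneg_left h (Real.rpow_pos_of_pos hT α)

lemma norm_smul_le_mul_of_le {E : Type*} [NormedAddCommGroup E] [NormedSpace ℝ E]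
    {a : ℝ} {v : E} {x y : ℝ} (ha : ‖a‖ ≤ x) (hv : ‖v‖ ≤ y) : ‖a • v‖ ≤ x * y := by
  rw [norm_smul]
  exact mul_le_mul ha hv (norm_nonneg _) ((norm_nonneg _).trans ha)

section Controlled

variable {U V : Type*} [NormedAddCommGroup U] [NormedSpace ℝ U]
  [NormedAddCommGroup V] [NormedSpace ℝ V] {T α : ℝ} {X : Icc (0:ℝ) T → U}

def ctrlRem (X : Icc (0:ℝ) T → U) (Z : Icc (0:ℝ) T → V) (Z' : Icc (0:ℝ) T → U →L[ℝ] V)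
    (s t : Icc (0:ℝ) T) : V :=
  Z t - Z s - Z' s (X t - X s)

lemma ctrlRem_eq_neg_add (Z : Icc (0:ℝ) T → V) (Z' : Icc (0:ℝ) T → U →L[ℝ] V)
    (s t : Icc (0:ℝ) T) :
    ctrlRem X Z Z' s t = -ctrlRem X Z Z' t s + (Z' t - Z' s) (X t - X s) := by
  simp only [ctrlRem, sub_apply, map_sub]
  abel

lemma hSemi_nonneg {E : Type*} [NormedAddCommGroup E] (β : ℝ) (f : Icc (0:ℝ) T → E) :
    0 ≤ hSemi T β f :=
  ratioSup_nonneg (g := fun s t => ‖f t - f s‖) fun _ _ => norm_nonneg _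

lemma rSemi_nonneg (X : Icc (0:ℝ) T → U) (Z : Icc (0:ℝ) T → V)
    (Z' : Icc (0:ℝ) T → U →L[ℝ] V) : 0 ≤ rSemi T α X Z Z' :=
  ratioSup_nonneg (g := fun s t => ‖ctrlRem X Z Z' s t‖) fun _ _ => norm_nonneg _

lemma norm_sub_le_hSemi_mul {E : Type*} [NormedAddCommGroup E] {β : ℝ} {f : Icc (0:ℝ) T → E}
    (hf : ∃ C, ∀ s t : Icc (0:ℝ) T, ‖f t - f s‖ ≤ C * |(t:ℝ) - s| ^ β) (s t : Icc (0:ℝ) T) :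
    ‖f t - f s‖ ≤ hSemi T β f * |(t:ℝ) - s| ^ β := by
  obtain ⟨C, hC⟩ := hf
  have hlt : ∀ s t : Icc (0:ℝ) T, (s:ℝ) < t →
      ‖f t - f s‖ ≤ hSemi T β f * |(t:ℝ) - s| ^ β := fun s t hst => by
    rw [abs_of_pos (sub_pos.2 hst)]
    exact le_ratioSup_mul hC hst
  rcases lt_trichotomy (s:ℝ) t with hst | hst | hst
  · exact hlt s t hst
  · rw [Subtype.ext hst, sub_self, norm_zero]
    exact mul_nonneg (hSemi_nonneg β f) (by positivity)
  · rw [norm_sub_rev, abs_sub_comm]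
    exact hlt t s hst

lemma norm_ctrlRem_le_rSemi_mul {Z : Icc (0:ℝ) T → V} {Z' : Icc (0:ℝ) T → U →L[ℝ] V}
    (hR : ∃ K, ∀ s t : Icc (0:ℝ) T, ‖ctrlRem X Z Z' s t‖ ≤ K * |(t:ℝ) - s| ^ (2 * α))
    {s t : Icc (0:ℝ) T} (hst : (s:ℝ) < t) :
    ‖ctrlRem X Z Z' s t‖ ≤ rSemi T α X Z Z' * ((t:ℝ) - s) ^ (2 * α) :=
  le_ratioSup_mul hR.choose_spec hst

lemma norm_ctrlRem_le_of_lt {CX A K : ℝ} (hCX : 0 ≤ CX) (hA : 0 ≤ A) (hK : 0 ≤ K)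
    (hX : ∀ s t : Icc (0:ℝ) T, ‖X t - X s‖ ≤ CX * |(t:ℝ) - s| ^ α)
    {Z : Icc (0:ℝ) T → V} {Z' : Icc (0:ℝ) T → U →L[ℝ] V}
    (hZ' : ∀ s t : Icc (0:ℝ) T, ‖Z' t - Z' s‖ ≤ A * |(t:ℝ) - s| ^ α)
    (hR : ∀ s t : Icc (0:ℝ) T, (s:ℝ) < t → ‖ctrlRem X Z Z' s t‖ ≤ K * ((t:ℝ) - s) ^ (2 * α))
    (s t : Icc (0:ℝ) T) :
    ‖ctrlRem X Z Z' s t‖ ≤ (K + A * CX) * |(t:ℝ) - s| ^ (2 * α) := by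
  rcases lt_trichotomy (s:ℝ) t with hst | hst | hst
  · rw [abs_of_pos (sub_pos.2 hst)]
    refine (hR s t hst).trans (mul_le_mul_of_nonneg_right ?_ (by positivity))
    nlinarith [mul_nonneg hA hCX]
  · rw [Subtype.ext hst, ctrlRem, sub_self, sub_self, map_zero, sub_zero, norm_zero]
    positivity
  · have hflip := hR t s hst
    rw [← abs_of_pos (sub_pos.2 hst), abs_sub_comm] at hflip
    calc ‖ctrlRem X Z Z' s t‖
        ≤ ‖ctrlRem X Z Z' t s‖ + ‖Z' t - Z' s‖ * ‖X t - X s‖ := by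
          rw [ctrlRem_eq_neg_add]
          exact (norm_add_le _ _).trans (by
            rw [norm_neg]; gcongr; exact ContinuousLinearMap.le_opNorm _ _)
      _ ≤ K * |(t:ℝ) - s| ^ (2 * α) + A * |(t:ℝ) - s| ^ α * (CX * |(t:ℝ) - s| ^ α) := by
          gcongr
          · exact hZ' s t
          · exact hX s t
      _ = (K + A * CX) * |(t:ℝ) - s| ^ (2 * α) := by
          rw [rpow_two_mul_eq_mul_self (abs_nonneg _)]; ring

lemma norm_sub_le_of_ctrlRem {CX K B : ℝ} (hα : 0 ≤ α) (hK : 0 ≤ K)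
    (hX : ∀ s t : Icc (0:ℝ) T, ‖X t - X s‖ ≤ CX * |(t:ℝ) - s| ^ α)
    {Z : Icc (0:ℝ) T → V} {Z' : Icc (0:ℝ) T → U →L[ℝ] V} {s t : Icc (0:ℝ) T}
    (hR : ‖ctrlRem X Z Z' s t‖ ≤ K * |(t:ℝ) - s| ^ (2 * α)) (hZ' : ‖Z' s‖ ≤ B) :
    ‖Z t - Z s‖ ≤ (K * T ^ α + B * CX) * |(t:ℝ) - s| ^ α := by
  have hd : 0 ≤ |(t:ℝ) - s| ^ α := by positivity
  calc ‖Z t - Z s‖ = ‖ctrlRem X Z Z' s t + Z' s (X t - X s)‖ := by rw [ctrlRem, sub_add_cancel]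
    _ ≤ K * (T ^ α * |(t:ℝ) - s| ^ α) + B * (CX * |(t:ℝ) - s| ^ α) := by
      refine (norm_add_le _ _).trans (add_le_add ?_ ?_)
      · refine hR.trans (mul_le_mul_of_nonneg_left ?_ hK)
        rw [rpow_two_mul_eq_mul_self (abs_nonneg _)]
        exact mul_le_mul_of_nonneg_right (abs_sub_rpow_le hα s t) hd
      · exact (ContinuousLinearMap.le_of_opNorm_le _ hZ' _).trans
          (mul_le_mul_of_nonneg_left (hX s t) ((norm_nonneg _).trans hZ'))
    _ = (K * T ^ α + B * CX) * |(t:ℝ) - s| ^ α := by ring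

structure ControlledBound (α : ℝ) (X : Icc (0:ℝ) T → U) (Z : Icc (0:ℝ) T → V)
    (Z' : Icc (0:ℝ) T → U →L[ℝ] V) (A : ℝ) : Prop where
  norm_le : ∀ t, ‖Z t‖ ≤ A
  norm_deriv_le : ∀ t, ‖Z' t‖ ≤ A
  norm_sub_le : ∀ s t, ‖Z t - Z s‖ ≤ A * |(t:ℝ) - s| ^ α
  norm_deriv_sub_le : ∀ s t, ‖Z' t - Z' s‖ ≤ A * |(t:ℝ) - s| ^ α
  norm_ctrlRem_le : ∀ s t, ‖ctrlRem X Z Z' s t‖ ≤ A * |(t:ℝ) - s| ^ (2 * α)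

namespace ControlledBound

variable {Z : Icc (0:ℝ) T → V} {Z' : Icc (0:ℝ) T → U →L[ℝ] V} {A : ℝ}

lemma nonneg (h : ControlledBound α X Z Z' A) (t : Icc (0:ℝ) T) : 0 ≤ A :=
  (norm_nonneg _).trans (h.norm_le t)

lemma mem_ctrlSet (h : ControlledBound α X Z Z' A) : (Z, Z') ∈ ctrlSet T α X :=
  ⟨⟨A, h.norm_deriv_sub_le⟩, ⟨A, h.norm_ctrlRem_le⟩⟩

lemma ctrlNorm_le (hT : 0 ≤ T) (h : ControlledBound α X Z Z' A) :
    ctrlNorm hT α X (Z, Z') ≤ 4 * A := by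
  have hA := h.nonneg ⟨0, left_mem_Icc.2 hT⟩
  have hH : hSemi T α Z' ≤ A := ratioSup_le hA h.norm_deriv_sub_le
  have hR : rSemi T α X Z Z' ≤ A := ratioSup_le hA h.norm_ctrlRem_le
  have h0 := h.norm_le ⟨0, left_mem_Icc.2 hT⟩
  have h0' := h.norm_deriv_le ⟨0, left_mem_Icc.2 hT⟩
  simp only [ctrlNorm]
  linarith

lemma of_ctrlNorm_parts_le (hT : 0 ≤ T) (hα : 0 ≤ α) {CX N : ℝ} (hCX : 0 ≤ CX)
    (hX : ∀ s t : Icc (0:ℝ) T, ‖X t - X s‖ ≤ CX * |(t:ℝ) - s| ^ α)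
    (hZ0 : ‖Z ⟨0, left_mem_Icc.2 hT⟩‖ ≤ N) (hZ'0 : ‖Z' ⟨0, left_mem_Icc.2 hT⟩‖ ≤ N)
    (hdiff : ∀ s t : Icc (0:ℝ) T, ‖Z' t - Z' s‖ ≤ N * |(t:ℝ) - s| ^ α)
    (hrem : ∀ s t : Icc (0:ℝ) T, (s:ℝ) < t →
      ‖ctrlRem X Z Z' s t‖ ≤ N * ((t:ℝ) - s) ^ (2 * α)) :
    ControlledBound α X Z Z' (2 * (1 + T ^ α) ^ 2 * (1 + CX) * N) := by
  have hN : 0 ≤ N := (norm_nonneg _).trans hZ0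
  have ha : 0 ≤ T ^ α := by positivity
  have hrem' := norm_ctrlRem_le_of_lt hCX hN hN hX hdiff hrem
  have hderiv (t) : ‖Z' t‖ ≤ N * (1 + T ^ α) :=
    calc ‖Z' t‖ ≤ ‖Z' ⟨0, _⟩‖ + ‖Z' t - Z' ⟨0, _⟩‖ := norm_le_norm_add_norm_sub' _ _
      _ ≤ N + N * T ^ α :=
        add_le_add hZ'0 ((hdiff _ t).trans (mul_le_mul_of_nonneg_left (abs_sub_rpow_le hα _ _) hN))
      _ = N * (1 + T ^ α) := by ring
  have hsub (s t) : ‖Z t - Z s‖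
      ≤ ((N + N * CX) * T ^ α + N * (1 + T ^ α) * CX) * |(t:ℝ) - s| ^ α :=
    norm_sub_le_of_ctrlRem hα (by positivity) hX (hrem' s t) (hderiv s)
  have hval (t) : ‖Z t‖ ≤ N + ((N + N * CX) * T ^ α + N * (1 + T ^ α) * CX) * T ^ α :=
    (norm_le_norm_add_norm_sub' _ _).trans (add_le_add hZ0
      ((hsub _ t).trans (mul_le_mul_of_nonneg_left (abs_sub_rpow_le hα _ _) (by positivity))))
  have hCXa := mul_nonneg ha hCX
  have hCXaa := mul_nonneg ha hCXa
  refine ⟨fun t => (hval t).trans ?_, fun t => (hderiv t).trans ?_,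
    fun s t => (hsub s t).trans ?_, fun s t => (hdiff s t).trans ?_,
    fun s t => (hrem' s t).trans ?_⟩
  all_goals try refine mul_le_mul_of_nonneg_right ?_ (by positivity)
  all_goals nlinarith [mul_nonneg hN ha, mul_nonneg hN hCX, mul_nonneg hN hCXa,
    mul_nonneg hN hCXaa, mul_nonneg hN (mul_nonneg ha ha), mul_nonneg hN (mul_nonneg ha hCXaa),
    mul_nonneg hN (mul_nonneg ha (mul_nonneg ha ha))]

lemma of_mem_ctrlSet (hT : 0 ≤ T) (hα : 0 ≤ α) {CX : ℝ} (hCX : 0 ≤ CX)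
    (hX : ∀ s t : Icc (0:ℝ) T, ‖X t - X s‖ ≤ CX * |(t:ℝ) - s| ^ α)
    (h : (Z, Z') ∈ ctrlSet T α X) :
    ControlledBound α X Z Z' (2 * (1 + T ^ α) ^ 2 * (1 + CX) * ctrlNorm hT α X (Z, Z')) := by
  have hN : ctrlNorm hT α X (Z, Z') = hSemi T α Z' + rSemi T α X Z Z'
      + ‖Z ⟨0, left_mem_Icc.2 hT⟩‖ + ‖Z' ⟨0, left_mem_Icc.2 hT⟩‖ := rfl
  have hH := hSemi_nonneg α Z'
  have hR := rSemi_nonneg (α := α) X Z Z'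
  have hZ0 := norm_nonneg (Z ⟨0, left_mem_Icc.2 hT⟩)
  have hZ'0 := norm_nonneg (Z' ⟨0, left_mem_Icc.2 hT⟩)
  refine of_ctrlNorm_parts_le hT hα hCX hX (by rw [hN]; linarith) (by rw [hN]; linarith)
    (fun s t => (norm_sub_le_hSemi_mul h.1 s t).trans
      (mul_le_mul_of_nonneg_right (by rw [hN]; linarith) (by positivity)))
    (fun s t hst => (norm_ctrlRem_le_rSemi_mul h.2 hst).trans
      (mul_le_mul_of_nonneg_right (by rw [hN]; linarith) (by positivity)))

end ControlledBound

end Controlled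

section Product

variable {U V : Type*} [NormedAddCommGroup U] [NormedSpace ℝ U]
  [NormedAddCommGroup V] [NormedSpace ℝ V] {T α : ℝ} {X : Icc (0:ℝ) T → U}
  {Z : Icc (0:ℝ) T → ℝ} {Z' : Icc (0:ℝ) T → U →L[ℝ] ℝ}
  {Y : Icc (0:ℝ) T → V} {Y' : Icc (0:ℝ) T → U →L[ℝ] V}

lemma ctrlRem_smul (s t : Icc (0:ℝ) T) :
    ctrlRem X (fun t => Z t • Y t) (fun t => (Z' t).smulRight (Y t) + Z t • Y' t) s t
      = (Z t - Z s) • (Y t - Y s) + ctrlRem X Z Z' s t • Y s + Z s • ctrlRem X Y Y' s t := by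
  simp only [ctrlRem, add_apply, ContinuousLinearMap.smulRight_apply, smul_apply]
  module

lemma smulRight_add_smul_sub_apply (s t : Icc (0:ℝ) T) (u : U) :
    ((Z' t).smulRight (Y t) + Z t • Y' t - ((Z' s).smulRight (Y s) + Z s • Y' s)) u
      = (Z' t - Z' s) u • Y t + Z' s u • (Y t - Y s) + (Z t - Z s) • Y' t u
        + Z s • (Y' t - Y' s) u := by
  simp only [sub_apply, add_apply, ContinuousLinearMap.smulRight_apply, smul_apply]
  module

theorem ControlledBound.smul {A B : ℝ} (hZ : ControlledBound α X Z Z' A)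
    (hY : ControlledBound α X Y Y' B) :
    ControlledBound α X (fun t => Z t • Y t) (fun t => (Z' t).smulRight (Y t) + Z t • Y' t)
      (4 * (A * B)) where
  norm_le t := by
    have hAB := mul_nonneg (hZ.nonneg t) (hY.nonneg t)
    linarith [norm_smul_le_mul_of_le (hZ.norm_le t) (hY.norm_le t)]
  norm_deriv_le t := by
    have hAB := mul_nonneg (hZ.nonneg t) (hY.nonneg t)
    have h1 : ‖(Z' t).smulRight (Y t)‖ ≤ A * B := by
      rw [ContinuousLinearMap.norm_smulRight_apply]
      exact mul_le_mul (hZ.norm_deriv_le t) (hY.norm_le t) (norm_nonneg _) (hZ.nonneg t)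
    have h2 : ‖Z t • Y' t‖ ≤ A * B := norm_smul_le_mul_of_le (hZ.norm_le t) (hY.norm_deriv_le t)
    linarith [norm_add_le ((Z' t).smulRight (Y t)) (Z t • Y' t)]
  norm_sub_le s t := by
    have hd : 0 ≤ A * B * |(t:ℝ) - s| ^ α :=
      mul_nonneg (mul_nonneg (hZ.nonneg t) (hY.nonneg t)) (by positivity)
    have h1 := norm_smul_le_mul_of_le (hZ.norm_sub_le s t) (hY.norm_le t)
    have h2 := norm_smul_le_mul_of_le (hZ.norm_le s) (hY.norm_sub_le s t)
    have hsplit : Z t • Y t - Z s • Y s = (Z t - Z s) • Y t + Z s • (Y t - Y s) := by module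
    rw [hsplit]
    nlinarith [norm_add_le ((Z t - Z s) • Y t) (Z s • (Y t - Y s))]
  norm_deriv_sub_le s t := by
    have hd : 0 ≤ A * B * |(t:ℝ) - s| ^ α :=
      mul_nonneg (mul_nonneg (hZ.nonneg t) (hY.nonneg t)) (by positivity)
    refine ContinuousLinearMap.opNorm_le_bound _ (by linarith) fun u => ?_
    have h1 := norm_smul_le_mul_of_le
      ((Z' t - Z' s).le_of_opNorm_le (hZ.norm_deriv_sub_le s t) u) (hY.norm_le t)
    have h2 := norm_smul_le_mul_of_le ((Z' s).le_of_opNorm_le (hZ.norm_deriv_le s) u)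
      (hY.norm_sub_le s t)
    have h3 := norm_smul_le_mul_of_le (hZ.norm_sub_le s t)
      ((Y' t).le_of_opNorm_le (hY.norm_deriv_le t) u)
    have h4 := norm_smul_le_mul_of_le (hZ.norm_le s)
      ((Y' t - Y' s).le_of_opNorm_le (hY.norm_deriv_sub_le s t) u)
    rw [smulRight_add_smul_sub_apply]
    refine norm_add₄_le.trans (le_of_le_of_eq (add_le_add (add_le_add (add_le_add h1 h2) h3) h4) ?_)
    ring
  norm_ctrlRem_le s t := by
    have hd : 0 ≤ A * B * |(t:ℝ) - s| ^ (2 * α) :=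
      mul_nonneg (mul_nonneg (hZ.nonneg t) (hY.nonneg t)) (by positivity)
    have h1 := norm_smul_le_mul_of_le (hZ.norm_sub_le s t) (hY.norm_sub_le s t)
    have h2 := norm_smul_le_mul_of_le (hZ.norm_ctrlRem_le s t) (hY.norm_le s)
    have h3 := norm_smul_le_mul_of_le (hZ.norm_le s) (hY.norm_ctrlRem_le s t)
    rw [ctrlRem_smul]
    refine norm_add₃_le.trans ((add_le_add (add_le_add h1 h2) h3).trans ?_)
    rw [rpow_two_mul_eq_mul_self (abs_nonneg _)] at hd ⊢
    nlinarith

end Product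

theorem controlled_path_product_general
    (U V : Type*) [NormedAddCommGroup U] [NormedSpace ℝ U]
    [NormedAddCommGroup V] [NormedSpace ℝ V]
    (T α : ℝ) (hT : 0 < T) (hα : α ∈ Set.Ioc (1/3 : ℝ) (1/2 : ℝ))
    (X : Set.Icc (0:ℝ) T → U) (CX : ℝ)
    (hX : ∀ s t : Set.Icc (0:ℝ) T, ‖X t - X s‖ ≤ CX * |(t : ℝ) - (s : ℝ)| ^ α) :
    ∃ C : ℝ, 0 < C ∧
      ∀ (Z : Set.Icc (0:ℝ) T → ℝ) (Z' : Set.Icc (0:ℝ) T → U →L[ℝ] ℝ)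
        (Y : Set.Icc (0:ℝ) T → V) (Y' : Set.Icc (0:ℝ) T → U →L[ℝ] V),
        (Z, Z') ∈ ctrlSet (U := U) (V := ℝ) T α X →
        (Y, Y') ∈ ctrlSet (U := U) (V := V) T α X →
        ((fun t => Z t • Y t, fun t => (Z' t).smulRight (Y t) + Z t • Y' t)
            ∈ ctrlSet (U := U) (V := V) T α X) ∧
        ctrlNorm hT.le α X
            ((fun t => Z t • Y t), fun t => (Z' t).smulRight (Y t) + Z t • Y' t) ≤
          C * ctrlNorm hT.le α X (Z, Z') * ctrlNorm hT.le α X (Y, Y') := by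
  have hα0 : 0 ≤ α := by linarith [hα.1]
  have hCX : 0 ≤ CX := holder_const_nonneg hT hX
  set K := 2 * (1 + T ^ α) ^ 2 * (1 + CX)
  refine ⟨16 * K ^ 2, by positivity, fun Z Z' Y Y' hZ hY => ?_⟩
  have hZY := (ControlledBound.of_mem_ctrlSet hT.le hα0 hCX hX hZ).smul
    (ControlledBound.of_mem_ctrlSet hT.le hα0 hCX hX hY)
  exact ⟨hZY.mem_ctrlSet, (hZY.ctrlNorm_le hT.le).trans_eq (by ring)⟩

theorem controlled_path_product
    (U V : Type*) [NormedAddCommGroup U] [NormedSpace ℝ U] [CompleteSpace U]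
    [NormedAddCommGroup V] [NormedSpace ℝ V] [CompleteSpace V]
    (T α : ℝ) (hT : 0 < T) (hα : α ∈ Set.Ioc (1/3 : ℝ) (1/2 : ℝ))
    (X : Set.Icc (0:ℝ) T → U) (CX : ℝ)
    (hX : ∀ s t : Set.Icc (0:ℝ) T, ‖X t - X s‖ ≤ CX * |(t : ℝ) - (s : ℝ)| ^ α) :
    ∃ C : ℝ, 0 < C ∧
      ∀ (Z : Set.Icc (0:ℝ) T → ℝ) (Z' : Set.Icc (0:ℝ) T → U →L[ℝ] ℝ)
        (Y : Set.Icc (0:ℝ) T → V) (Y' : Set.Icc (0:ℝ) T → U →L[ℝ] V),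
        (Z, Z') ∈ ctrlSet (U := U) (V := ℝ) T α X →
        (Y, Y') ∈ ctrlSet (U := U) (V := V) T α X →
        ((fun t => Z t • Y t, fun t => (Z' t).smulRight (Y t) + Z t • Y' t)
            ∈ ctrlSet (U := U) (V := V) T α X) ∧
        ctrlNorm hT.le α X
            ((fun t => Z t • Y t), fun t => (Z' t).smulRight (Y t) + Z t • Y' t) ≤
          C * ctrlNorm hT.le α X (Z, Z') * ctrlNorm hT.le α X (Y, Y') :=
  controlled_path_product_general U V T α hT hα X CX hX
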